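/- Let X, X̃ ∈ 𝕆^{n×k}. Suppose either θ ∈ {0,1} or tr(XᵀAX + XᵀD) ≥ 0. If tr(X̃ᵀ E(X) X̃) ≥ tr(Xᵀ E(X) X), then f_θ(X) ≤ g_θ(X̃) + tr(X̃ᵀ D Xᵀ X̃)/(tr(X̃ᵀBX̃))^θ ≤ g_θ(X̃) + ‖X̃ᵀD‖_tr/(tr(X̃ᵀBX̃))^θ. Moreover, if the inequality tr(X̃ᵀ E(X) X̃) ≥ tr(Xᵀ E(X) X) is strict, then so is the first of the two conclusion inequalities. -/

import Mathlib

/-!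
With `t = tr(XᵀBX)`, `t̃ = tr(X̃ᵀBX̃)` and `c = tr(XᵀAX + XᵀD)`, expanding the traces shows that
`tr(X̃ᵀE(X)X̃) - tr(XᵀE(X)X)` is `2/t^θ` times `tr(X̃ᵀAX̃) + tr(X̃ᵀDXᵀX̃) - ((1-θ)c + θc·t̃/t)`.
Bernoulli's inequality `(t̃/t)^θ ≤ 1 - θ + θ t̃/t`, multiplied by `c`, turns this into
`f_θ(X) = c/t^θ ≤ ((1-θ)c + θc·t̃/t)/t̃^θ`, which gives the first inequality. For the second,
`tr(X̃ᵀDXᵀX̃) = tr(QM)` with `M = X̃ᵀD` and the contraction `Q = XᵀX̃`, and von Neumann's trace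
inequality bounds it by the sum of the singular values of `M`.
-/

open Matrix

noncomputable section

/-- `f_θ(X) = tr(XᵀAX + XᵀD) / (tr(XᵀBX))^θ`. -/
def fTheta {n k : ℕ} (A B : Matrix (Fin n) (Fin n) ℝ) (D : Matrix (Fin n) (Fin k) ℝ)
    (θ : ℝ) (X : Matrix (Fin n) (Fin k) ℝ) : ℝ :=
  (trace (Xᵀ * A * X) + trace (Xᵀ * D)) / trace (Xᵀ * B * X) ^ θ

/-- `g_θ(X) = tr(XᵀAX) / (tr(XᵀBX))^θ`. -/
def gTheta {n k : ℕ} (A B : Matrix (Fin n) (Fin n) ℝ) (θ : ℝ)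
    (X : Matrix (Fin n) (Fin k) ℝ) : ℝ :=
  trace (Xᵀ * A * X) / trace (Xᵀ * B * X) ^ θ

/-- `f₁(X) = tr(XᵀAX + XᵀD) / tr(XᵀBX)`. -/
def f1 {n k : ℕ} (A B : Matrix (Fin n) (Fin n) ℝ) (D : Matrix (Fin n) (Fin k) ℝ)
    (X : Matrix (Fin n) (Fin k) ℝ) : ℝ :=
  (trace (Xᵀ * A * X) + trace (Xᵀ * D)) / trace (Xᵀ * B * X)

/-- `E(X) = (2/(tr(XᵀBX))^θ) · [A + (DXᵀ + XDᵀ)/2 − θ f₁(X) B]`. -/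
def Emat {n k : ℕ} (A B : Matrix (Fin n) (Fin n) ℝ) (D : Matrix (Fin n) (Fin k) ℝ)
    (θ : ℝ) (X : Matrix (Fin n) (Fin k) ℝ) : Matrix (Fin n) (Fin n) ℝ :=
  (2 / trace (Xᵀ * B * X) ^ θ) •
    (A + (2⁻¹ : ℝ) • (D * Xᵀ + X * Dᵀ) - (θ * f1 A B D X) • B)

/-- The trace norm (sum of singular values) of a real matrix, expressed as the sum of the
square roots of the eigenvalues of `MᵀM`. -/
def traceNorm {m k : ℕ} (M : Matrix (Fin m) (Fin k) ℝ) : ℝ :=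
  ∑ i, Real.sqrt ((show (Mᵀ * M).IsHermitian by
    simpa using Matrix.isHermitian_conjTranspose_mul_self M).eigenvalues i)

namespace Matrix

variable {l m n : Type*} [Fintype l] [Fintype m] [Fintype n]

omit [Fintype n] in
lemma diag_transpose_mul_self (M : Matrix m n ℝ) (i : n) :
    (Mᵀ * M) i i = ∑ j, M j i ^ 2 := by
  simp [mul_apply, sq]

lemma trace_transpose_mul_eq_sum (M N : Matrix m n ℝ) :
    trace (Mᵀ * N) = ∑ i, ∑ j, M j i * N j i := by
  simp [trace, mul_apply]

/-- Writing `B = CᵀC`, a vanishing trace forces `BX = 0`, so `rank B + rank X ≤ card m`. -/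
lemma trace_transpose_mul_mul_pos [DecidableEq m] [DecidableEq n] {B : Matrix m m ℝ}
    (hB : B.PosSemidef) {X : Matrix m n ℝ} (hX : Xᵀ * X = 1)
    (hrank : Fintype.card m - Fintype.card n < B.rank) :
    0 < trace (Xᵀ * B * X) := by
  open scoped MatrixOrder Matrix.Norms.L2Operator in
  obtain ⟨C, hC⟩ := CStarAlgebra.nonneg_iff_eq_star_mul_self.mp hB.nonneg
  rw [star_eq_conjTranspose, conjTranspose_eq_transpose_of_trivial] at hC
  have hXBX : Xᵀ * B * X = (C * X)ᵀ * (C * X) := by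
    simp only [hC, transpose_mul, Matrix.mul_assoc]
  have hnonneg : 0 ≤ trace (Xᵀ * B * X) := by
    simpa [hXBX] using (posSemidef_conjTranspose_mul_self (C * X)).trace_nonneg
  refine hnonneg.lt_of_ne fun hzero ↦ ?_
  have hCX : C * X = 0 := by
    rw [← trace_conjTranspose_mul_self_eq_zero_iff, conjTranspose_eq_transpose_of_trivial,
      ← hXBX, hzero]
  have hBX : B * X = 0 := by rw [hC, Matrix.mul_assoc, hCX, Matrix.mul_zero]
  have hrankX : X.rank = Fintype.card n := by
    rw [← rank_transpose_mul_self, hX, rank_one]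
  have hsum := rank_add_rank_le_card_of_mul_eq_zero hBX
  omega

/-- `1 - Y Yᵀ` is an orthogonal projection, so `1 - (XᵀY)(XᵀY)ᵀ = Xᵀ (1 - Y Yᵀ)ᵀ (1 - Y Yᵀ) X`. -/
lemma posSemidef_one_sub_mul_transpose_of_orthonormal [DecidableEq l] [DecidableEq m]
    [DecidableEq n] {X : Matrix m l ℝ} {Y : Matrix m n ℝ} (hX : Xᵀ * X = 1) (hY : Yᵀ * Y = 1) :
    (1 - (Xᵀ * Y) * (Xᵀ * Y)ᵀ).PosSemidef := by
  set P : Matrix m m ℝ := 1 - Y * Yᵀ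
  have hPP : Pᵀ * P = P := by
    simp only [P, transpose_sub, transpose_one, transpose_mul, transpose_transpose,
      Matrix.sub_mul, Matrix.mul_sub, Matrix.one_mul, Matrix.mul_one]
    rw [Matrix.mul_assoc, ← Matrix.mul_assoc Yᵀ, hY, Matrix.one_mul]
    abel
  have h : (P * X)ᵀ * (P * X) = 1 - (Xᵀ * Y) * (Xᵀ * Y)ᵀ := by
    rw [transpose_mul, Matrix.mul_assoc, ← Matrix.mul_assoc Pᵀ, hPP]
    simp only [P, Matrix.sub_mul, Matrix.mul_sub, Matrix.one_mul, ← Matrix.mul_assoc, hX,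
      transpose_mul, transpose_transpose]
  rw [← h, ← conjTranspose_eq_transpose_of_trivial]
  exact posSemidef_conjTranspose_mul_self (P * X)

end Matrix

namespace Matrix

variable {m n : Type*} [Fintype m] [Fintype n] [DecidableEq n]

lemma transpose_eigenvectorUnitary_mul_self {A : Matrix n n ℝ} (hA : A.IsHermitian) :
    (hA.eigenvectorUnitary : Matrix n n ℝ)ᵀ * hA.eigenvectorUnitary = 1 := by
  rw [← conjTranspose_eq_transpose_of_trivial, ← star_eq_conjTranspose,
    Unitary.coe_star_mul_self]

lemma eigenvectorUnitary_mul_transpose_self {A : Matrix n n ℝ} (hA : A.IsHermitian) :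
    (hA.eigenvectorUnitary : Matrix n n ℝ) * (hA.eigenvectorUnitary : Matrix n n ℝ)ᵀ = 1 := by
  rw [← conjTranspose_eq_transpose_of_trivial, ← star_eq_conjTranspose,
    Unitary.mul_star_self_of_mem hA.eigenvectorUnitary.2]

lemma sum_sq_mul_eigenvectorUnitary_apply (M : Matrix m n ℝ) (hM : (Mᵀ * M).IsHermitian)
    (i : n) : ∑ j, (M * (hM.eigenvectorUnitary : Matrix n n ℝ)) j i ^ 2 = hM.eigenvalues i := by
  have hdiag := hM.conjStarAlgAut_star_eigenvectorUnitary
  rw [Unitary.conjStarAlgAut_star_apply, star_eq_conjTranspose,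
    conjTranspose_eq_transpose_of_trivial, RCLike.ofReal_real_eq_id, Function.id_comp] at hdiag
  rw [← diag_transpose_mul_self, transpose_mul, ← diagonal_apply_eq hM.eigenvalues i, ← hdiag]
  simp only [Matrix.mul_assoc]

lemma sum_sq_transpose_mul_apply_le_one {Q : Matrix n m ℝ} (hQ : (1 - Q * Qᵀ).PosSemidef)
    {V : Matrix n n ℝ} (hV : Vᵀ * V = 1) (i : n) : ∑ j, (Qᵀ * V) j i ^ 2 ≤ 1 := by
  have hdiag : (Vᵀ * (1 - Q * Qᵀ) * V : Matrix n n ℝ) i i = 1 - ∑ j, (Qᵀ * V) j i ^ 2 := by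
    rw [← diag_transpose_mul_self, Matrix.mul_sub, Matrix.sub_mul, Matrix.mul_one, hV,
      transpose_mul, transpose_transpose]
    simp only [Matrix.mul_assoc, sub_apply, one_apply_eq]
  have := (hQ.conjTranspose_mul_mul_same V).diag_nonneg (i := i)
  rw [conjTranspose_eq_transpose_of_trivial] at this
  linarith

lemma trace_mul_eq_trace_transpose_mul (Q : Matrix n m ℝ) (M : Matrix m n ℝ)
    {V : Matrix n n ℝ} (hV : V * Vᵀ = 1) : trace (Q * M) = trace ((Qᵀ * V)ᵀ * (M * V)) := by
  rw [transpose_mul, transpose_transpose, Matrix.mul_assoc, trace_mul_comm Vᵀ, Matrix.mul_assoc,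
    Matrix.mul_assoc, hV, Matrix.mul_one]

end Matrix

/-- Von Neumann's trace inequality for a contraction `Q`: pair the columns of `QᵀV` and `MV`,
where `V` diagonalises `MᵀM`, and apply Cauchy–Schwarz to each pair. -/
lemma trace_mul_le_traceNorm {m k : ℕ} (M : Matrix (Fin m) (Fin k) ℝ)
    (Q : Matrix (Fin k) (Fin m) ℝ) (hQ : (1 - Q * Qᵀ).PosSemidef) :
    trace (Q * M) ≤ traceNorm M := by
  have hM : (Mᵀ * M).IsHermitian := by simpa using isHermitian_conjTranspose_mul_self M
  set V : Matrix (Fin k) (Fin k) ℝ := ↑hM.eigenvectorUnitary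
  rw [trace_mul_eq_trace_transpose_mul Q M (eigenvectorUnitary_mul_transpose_self hM),
    trace_transpose_mul_eq_sum, traceNorm]
  refine Finset.sum_le_sum fun i _ ↦ ?_
  calc ∑ j, (Qᵀ * V) j i * (M * V) j i
      ≤ √(∑ j, (Qᵀ * V) j i ^ 2) * √(∑ j, (M * V) j i ^ 2) :=
        Real.sum_mul_le_sqrt_mul_sqrt _ _ _
    _ ≤ 1 * √(hM.eigenvalues i) := by
        rw [sum_sq_mul_eigenvectorUnitary_apply M hM i]
        gcongr
        exact Real.sqrt_le_one.mpr
          (sum_sq_transpose_mul_apply_le_one hQ (transpose_eigenvectorUnitary_mul_self hM) i)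
    _ = _ := one_mul _

/-- Bernoulli's inequality `s ^ θ ≤ 1 - θ + θ s` scaled by `c`; for `θ ∈ {0, 1}` it is an
equality, so then the sign of `c` does not matter. -/
lemma mul_rpow_le_one_sub_mul_add_mul {c s θ : ℝ} (hs : 0 ≤ s) (hθ0 : 0 ≤ θ) (hθ1 : θ ≤ 1)
    (hc : (θ = 0 ∨ θ = 1) ∨ 0 ≤ c) : c * s ^ θ ≤ (1 - θ) * c + θ * (c * s) := by
  rcases hc with (rfl | rfl) | hc
  · simp
  · simp
  · have h := rpow_one_add_le_one_add_mul_self (s := s - 1) (by linarith) hθ0 hθ1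
    rw [add_sub_cancel] at h
    nlinarith [mul_le_mul_of_nonneg_left h hc]

lemma div_rpow_le_one_sub_mul_add_mul_div_rpow {c t t' θ : ℝ} (ht : 0 < t) (ht' : 0 < t')
    (hθ0 : 0 ≤ θ) (hθ1 : θ ≤ 1) (hc : (θ = 0 ∨ θ = 1) ∨ 0 ≤ c) :
    c / t ^ θ ≤ ((1 - θ) * c + θ * (c * (t' / t))) / t' ^ θ := by
  have hs : 0 ≤ t' / t := by positivity
  have htθ : 0 < t ^ θ := by positivity
  have hsplit : t' ^ θ = t ^ θ * (t' / t) ^ θ := by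
    rw [← Real.mul_rpow ht.le hs, mul_div_cancel₀ _ ht.ne']
  rw [div_le_div_iff₀ htθ (by positivity), hsplit, ← mul_assoc, mul_right_comm]
  exact mul_le_mul_of_nonneg_right (mul_rpow_le_one_sub_mul_add_mul hs hθ0 hθ1 hc) htθ.le

section Emat

variable {n k : ℕ} (A B : Matrix (Fin n) (Fin n) ℝ) (D : Matrix (Fin n) (Fin k) ℝ) (θ : ℝ)

lemma trace_transpose_mul_Emat_mul (X Y : Matrix (Fin n) (Fin k) ℝ) :
    trace (Yᵀ * Emat A B D θ X * Y) =
      2 / trace (Xᵀ * B * X) ^ θ * (trace (Yᵀ * A * Y) + trace (Yᵀ * D * Xᵀ * Y)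
        - θ * f1 A B D X * trace (Yᵀ * B * Y)) := by
  have hsymm : trace (Yᵀ * (X * (Dᵀ * Y))) = trace (Yᵀ * (D * (Xᵀ * Y))) := by
    rw [← trace_transpose]
    simp only [transpose_mul, transpose_transpose, Matrix.mul_assoc]
  simp only [Emat, Matrix.smul_mul, Matrix.mul_smul, trace_smul, smul_eq_mul, Matrix.mul_add,
    Matrix.add_mul, Matrix.mul_sub, Matrix.sub_mul, trace_add, trace_sub, Matrix.mul_assoc]
  rw [hsymm]
  ring

lemma trace_transpose_mul_Emat_mul_sub {X : Matrix (Fin n) (Fin k) ℝ} (hX : Xᵀ * X = 1)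
    (ht : trace (Xᵀ * B * X) ≠ 0) (Y : Matrix (Fin n) (Fin k) ℝ) :
    trace (Yᵀ * Emat A B D θ X * Y) - trace (Xᵀ * Emat A B D θ X * X) =
      2 / trace (Xᵀ * B * X) ^ θ * (trace (Yᵀ * A * Y) + trace (Yᵀ * D * Xᵀ * Y)
        - ((1 - θ) * (trace (Xᵀ * A * X) + trace (Xᵀ * D)) + θ * ((trace (Xᵀ * A * X)
          + trace (Xᵀ * D)) * (trace (Yᵀ * B * Y) / trace (Xᵀ * B * X))))) := by
  rw [trace_transpose_mul_Emat_mul, trace_transpose_mul_Emat_mul,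
    Matrix.mul_assoc (Xᵀ * D), hX, Matrix.mul_one, f1]
  field_simp
  ring

end Emat

theorem stmt2_general {n k : ℕ}
    (A B : Matrix (Fin n) (Fin n) ℝ) (hB : B.PosSemidef)
    (hrank : n - k < B.rank)
    (D : Matrix (Fin n) (Fin k) ℝ) (θ : ℝ) (hθ0 : 0 ≤ θ) (hθ1 : θ ≤ 1)
    (X Xt : Matrix (Fin n) (Fin k) ℝ) (hX : Xᵀ * X = 1) (hXt : Xtᵀ * Xt = 1)
    (hcase : (θ = 0 ∨ θ = 1) ∨ 0 ≤ trace (Xᵀ * A * X) + trace (Xᵀ * D))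
    (htr : trace (Xᵀ * Emat A B D θ X * X) ≤ trace (Xtᵀ * Emat A B D θ X * Xt)) :
    fTheta A B D θ X
        ≤ gTheta A B θ Xt + trace (Xtᵀ * D * Xᵀ * Xt) / trace (Xtᵀ * B * Xt) ^ θ
      ∧ gTheta A B θ Xt + trace (Xtᵀ * D * Xᵀ * Xt) / trace (Xtᵀ * B * Xt) ^ θ
          ≤ gTheta A B θ Xt + traceNorm (Xtᵀ * D) / trace (Xtᵀ * B * Xt) ^ θ
      ∧ (trace (Xᵀ * Emat A B D θ X * X) < trace (Xtᵀ * Emat A B D θ X * Xt) →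
          fTheta A B D θ X
            < gTheta A B θ Xt + trace (Xtᵀ * D * Xᵀ * Xt) / trace (Xtᵀ * B * Xt) ^ θ) := by
  have hrank' : Fintype.card (Fin n) - Fintype.card (Fin k) < B.rank := by simpa using hrank
  have ht := trace_transpose_mul_mul_pos hB hX hrank'
  have ht' := trace_transpose_mul_mul_pos hB hXt hrank'
  have hfactor : 0 < 2 / trace (Xᵀ * B * X) ^ θ := by positivity
  have hdiff := trace_transpose_mul_Emat_mul_sub A B D θ hX ht.ne' Xt
  have hf := div_rpow_le_one_sub_mul_add_mul_div_rpow ht ht' hθ0 hθ1 hcase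
  rw [← fTheta] at hf
  refine ⟨?_, ?_, fun hlt ↦ ?_⟩
  · have hbracket := (mul_nonneg_iff_of_pos_left hfactor).mp (hdiff ▸ sub_nonneg.mpr htr)
    rw [gTheta, ← add_div]
    exact hf.trans (div_le_div_of_nonneg_right (sub_nonneg.mp hbracket) (by positivity))
  · rw [gTheta]
    gcongr
    rw [Matrix.mul_assoc (Xtᵀ * D), trace_mul_comm]
    exact trace_mul_le_traceNorm _ _ (posSemidef_one_sub_mul_transpose_of_orthonormal hX hXt)
  · have hbracket := (mul_pos_iff_of_pos_left hfactor).mp (hdiff ▸ sub_pos.mpr hlt)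
    rw [gTheta, ← add_div]
    exact hf.trans_lt (div_lt_div_of_pos_right (sub_pos.mp hbracket) (by positivity))

/-- Theorem 2.4. -/
theorem stmt2 {n k : ℕ} (hk : 1 ≤ k) (hkn : k < n)
    (A B : Matrix (Fin n) (Fin n) ℝ) (hA : A.IsSymm) (hB : B.PosSemidef)
    (hrank : n - k < B.rank)
    (D : Matrix (Fin n) (Fin k) ℝ) (θ : ℝ) (hθ0 : 0 ≤ θ) (hθ1 : θ ≤ 1)
    (X Xt : Matrix (Fin n) (Fin k) ℝ) (hX : Xᵀ * X = 1) (hXt : Xtᵀ * Xt = 1)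
    (hcase : (θ = 0 ∨ θ = 1) ∨ 0 ≤ trace (Xᵀ * A * X) + trace (Xᵀ * D))
    (htr : trace (Xᵀ * Emat A B D θ X * X) ≤ trace (Xtᵀ * Emat A B D θ X * Xt)) :
    fTheta A B D θ X
        ≤ gTheta A B θ Xt + trace (Xtᵀ * D * Xᵀ * Xt) / trace (Xtᵀ * B * Xt) ^ θ
      ∧ gTheta A B θ Xt + trace (Xtᵀ * D * Xᵀ * Xt) / trace (Xtᵀ * B * Xt) ^ θ
          ≤ gTheta A B θ Xt + traceNorm (Xtᵀ * D) / trace (Xtᵀ * B * Xt) ^ θ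
      ∧ (trace (Xᵀ * Emat A B D θ X * X) < trace (Xtᵀ * Emat A B D θ X * Xt) →
          fTheta A B D θ X
            < gTheta A B θ Xt + trace (Xtᵀ * D * Xᵀ * Xt) / trace (Xtᵀ * B * Xt) ^ θ) :=
  stmt2_general A B hB hrank D θ hθ0 hθ1 X Xt hX hXt hcase htr

end
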